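/- Let ρ be an ordinal and x, u, v : ℕ → X sequences such that for every m ∈ ℕ, {n : d (u n) (x n) ♯ ω^ρ · m ≤ d (v n) (x n)} ∈ F. Then u and v are not ρ-limitedly distant; in particular they represent hypernodes lying in different ρ-galaxies. -/

import Mathlib

/-! A point `u` closer to `x` than `v` by a margin `c` in the natural sum must be at distance
at least `c` from `v`; since every margin `ω ^ ρ * m` is realised on a set of the ultrafilter,
`d u v` eventually exceeds each `ω ^ ρ * μ`. The natural sum is needed because it is commutative
and strictly monotone in each argument, so the common summand `d u x` can be cancelled. -/

open Filter Ordinal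
open scoped Ordinal

universe u

/-- Natural (Hessenberg) sum of ordinals, as in the older Mathlib's `Ordinal.nadd`
(file `SetTheory/Ordinal/NaturalOps`, since removed from Mathlib). -/
noncomputable def Ordinal.nadd : Ordinal.{u} → Ordinal.{u} → Ordinal.{u}
  | a, b =>
    max (blsub.{u, u} a fun a' _ => nadd a' b) (blsub.{u, u} b fun b' _ => nadd a b')
termination_by a b => (a, b)

infixl:65 " ♯ " => Ordinal.nadd

/-- Sequences `x, y : ℕ → X` are `ρ`-limitedly distant if there exists `μ ∈ ℕ` with
`{n : d (x n) (y n) ≤ ω^ρ · μ} ∈ F`. -/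
def LimitedlyDistant {X : Type*} (d : X → X → Ordinal) (F : Ultrafilter ℕ)
    (ρ : Ordinal) (x y : ℕ → X) : Prop :=
  ∃ μ : ℕ, {n : ℕ | d (x n) (y n) ≤ ω ^ ρ * μ} ∈ F

namespace Ordinal

theorem lt_nadd_iff {a b c : Ordinal.{u}} :
    a < b ♯ c ↔ (∃ b' < b, a ≤ b' ♯ c) ∨ ∃ c' < c, a ≤ b ♯ c' := by
  rw [Ordinal.nadd]
  simp [lt_blsub_iff]

theorem nadd_left_strictMono (a : Ordinal.{u}) : StrictMono (a ♯ ·) :=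
  fun _ _ h => lt_nadd_iff.2 (Or.inr ⟨_, h, le_rfl⟩)

theorem nadd_le_nadd_iff_left (a : Ordinal.{u}) {b c : Ordinal.{u}} : a ♯ b ≤ a ♯ c ↔ b ≤ c :=
  (nadd_left_strictMono a).le_iff_le

theorem nadd_comm (a b : Ordinal.{u}) : a ♯ b = b ♯ a := by
  rw [Ordinal.nadd, Ordinal.nadd, max_comm]
  congr <;> ext <;> apply nadd_comm
termination_by (a, b)

theorem omega0_opow_mul_lt_mul_succ (ρ : Ordinal) (μ : ℕ) :
    ω ^ ρ * (μ : Ordinal) < ω ^ ρ * ((μ + 1 : ℕ) : Ordinal) :=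
  (mul_lt_mul_iff_right₀ (opow_pos _ omega0_pos)).2 (by exact_mod_cast μ.lt_succ_self)

end Ordinal

theorem le_dist_of_nadd_le_dist {X : Type*} {d : X → X → Ordinal.{u}}
    (hdsymm : ∀ a b : X, d a b = d b a) (hdtri : ∀ a b c : X, d a c ≤ d a b ♯ d b c)
    {u v x : X} {c : Ordinal.{u}} (h : d u x ♯ c ≤ d v x) : c ≤ d u v := by
  rw [← Ordinal.nadd_le_nadd_iff_left (d u x)]
  calc d u x ♯ c ≤ d v x := h
    _ ≤ d v u ♯ d u x := hdtri _ _ _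
    _ = d u x ♯ d u v := by rw [hdsymm v u, Ordinal.nadd_comm]

theorem not_limitedlyDistant_of_closer_general
    (X : Type*) (d : X → X → Ordinal)
    (hdsymm : ∀ a b : X, d a b = d b a)
    (hdtri : ∀ a b c : X, d a c ≤ d a b ♯ d b c)
    (F : Ultrafilter ℕ)
    (ρ : Ordinal) (x u v : ℕ → X)
    (h : ∀ m : ℕ, {n : ℕ | d (u n) (x n) ♯ ω ^ ρ * m ≤ d (v n) (x n)} ∈ F) :
    ¬ LimitedlyDistant d F ρ u v := by
  rintro ⟨μ, hμ⟩
  obtain ⟨n, hclose, hfar⟩ := Filter.nonempty_of_mem (Filter.inter_mem hμ (h (μ + 1)))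
  have hμ_succ_le : ω ^ ρ * ((μ + 1 : ℕ) : Ordinal) ≤ ω ^ ρ * μ :=
    (le_dist_of_nadd_le_dist hdsymm hdtri hfar).trans hclose
  exact hμ_succ_le.not_gt (Ordinal.omega0_opow_mul_lt_mul_succ ρ μ)

theorem not_limitedlyDistant_of_closer
    (X : Type*) (d : X → X → Ordinal)
    (hd0 : ∀ a b : X, d a b = 0 ↔ a = b)
    (hdsymm : ∀ a b : X, d a b = d b a)
    (hdtri : ∀ a b c : X, d a c ≤ d a b ♯ d b c)
    (F : Ultrafilter ℕ) (hF : ∀ s : Set ℕ, sᶜ.Finite → s ∈ F)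
    (ρ : Ordinal) (x u v : ℕ → X)
    (h : ∀ m : ℕ, {n : ℕ | d (u n) (x n) ♯ ω ^ ρ * m ≤ d (v n) (x n)} ∈ F) :
    ¬ LimitedlyDistant d F ρ u v :=
  not_limitedlyDistant_of_closer_general X d hdsymm hdtri F ρ x u v h
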